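/- Let (R,𝓡) be a filtered ring such that the associated graded ring Gr𝓡 is left noetherian, let (M,𝓜) be a filtered left R-module whose 𝓡-filtration 𝓜 is good, and let N be a left R-submodule of M with the induced filtration 𝓝 given by F_i𝓝 = F_i𝓜 ∩ N. Then 𝓝 is a good 𝓡-filtration of N. -/

import Mathlib

namespace FilteredPaper

variable {R : Type} [Ring R]

/-- `F` is a filtration of the ring `R`. -/
structure IsRingFiltration (F : ℤ → AddSubgroup R) : Prop where
  exhaustive : ∀ r : R, ∃ i, r ∈ F i
  mono : ∀ i : ℤ, F (i - 1) ≤ F i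
  mul_mem : ∀ {i j : ℤ} {r s : R}, r ∈ F i → s ∈ F j → r * s ∈ F (i + j)
  bot : ∀ i < 0, F i = ⊥
  one_mem : (1 : R) ∈ F 0

/-- `FM` is an `F`-filtration of the left `R`-module `M`. -/
structure IsModuleFiltration (F : ℤ → AddSubgroup R) {M : Type} [AddCommGroup M]
    [Module R M] (FM : ℤ → AddSubgroup M) : Prop where
  exhaustive : ∀ m : M, ∃ i, m ∈ FM i
  mono : ∀ i : ℤ, FM (i - 1) ≤ FM i
  smul_mem : ∀ {i j : ℤ} {r : R} {m : M}, r ∈ F i → m ∈ FM j → r • m ∈ FM (i + j)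

/-- A realization of the associated graded ring `Gr𝓡 = ⊕ᵢ Fᵢ/Fᵢ₋₁` of the filtered ring
`(R,F)` as a ring `A`: the map `emb i` sends `x ∈ Fᵢ` to its symbol
`σᵢ(x) = x + Fᵢ₋₁ ∈ Grᵢ𝓡 ⊆ A`; it is additive with kernel `Fᵢ₋₁`, the symbol maps are
multiplicative, and `A` is the internal direct sum of the images. -/
structure GrRingReal (F : ℤ → AddSubgroup R) (A : Type) [Ring A] where
  emb : ∀ i : ℤ, F i →+ A
  emb_eq_zero_iff : ∀ (i : ℤ) (x : F i), emb i x = 0 ↔ (x : R) ∈ F (i - 1)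
  emb_mul : ∀ (i j : ℤ) (x : F i) (y : F j) (h : (x : R) * (y : R) ∈ F (i + j)),
      emb i x * emb j y = emb (i + j) ⟨(x : R) * y, h⟩
  emb_one : ∀ h : (1 : R) ∈ F 0, emb 0 ⟨1, h⟩ = 1
  internal : DirectSum.IsInternal fun i : ℤ => (emb i).range

/-- A realization of the associated graded module `Gr𝓜 = ⊕ᵢ FMᵢ/FMᵢ₋₁` of a filtered
left `R`-module `(M,FM)` as a left module `G` over (a realization `A` of) `Gr𝓡`. -/
structure GrModuleReal (F : ℤ → AddSubgroup R) {M : Type} [AddCommGroup M] [Module R M]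
    (FM : ℤ → AddSubgroup M) {A : Type} [Ring A] (re : GrRingReal F A)
    (G : Type) [AddCommGroup G] [Module A G] where
  emb : ∀ i : ℤ, FM i →+ G
  emb_eq_zero_iff : ∀ (i : ℤ) (x : FM i), emb i x = 0 ↔ (x : M) ∈ FM (i - 1)
  emb_smul : ∀ (i j : ℤ) (r : F i) (m : FM j) (h : (r : R) • (m : M) ∈ FM (i + j)),
      re.emb i r • emb j m = emb (i + j) ⟨(r : R) • (m : M), h⟩
  internal : DirectSum.IsInternal fun i : ℤ => (emb i).range

/-- The ideal `Gr𝓢` of (the realization `A` of) `Gr𝓡` determined by a subset `S ⊆ R`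
carrying the induced filtration `Fᵢ ∩ S`: it is generated (indeed spanned) by the
symbols of the elements of `S`. -/
def grIdealOf {F : ℤ → AddSubgroup R} {A : Type} [Ring A] (re : GrRingReal F A)
    (S : Set R) : Ideal A :=
  Ideal.span {a : A | ∃ (i : ℤ) (x : F i), (x : R) ∈ S ∧ re.emb i x = a}

/-- The induced filtration on the quotient module `M ⧸ N`. -/
def quotFil {M : Type} [AddCommGroup M] [Module R M] (FM : ℤ → AddSubgroup M)
    (N : Submodule R M) : ℤ → AddSubgroup (M ⧸ N) :=
  fun i => (FM i).map N.mkQ.toAddMonoidHom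

/-- `FM` is a good `F`-filtration of the left `R`-module `M`:
`FMᵢ = Σⱼ F_{i-pⱼ} · gⱼ` for finitely many `gⱼ ∈ M`, `pⱼ ∈ ℤ`. -/
def IsGoodFiltration (F : ℤ → AddSubgroup R) {M : Type} [AddCommGroup M] [Module R M]
    (FM : ℤ → AddSubgroup M) : Prop :=
  IsModuleFiltration F FM ∧
  ∃ (t : ℕ) (g : Fin t → M) (p : Fin t → ℤ), ∀ i : ℤ,
    FM i = ⨆ j : Fin t, (F (i - p j)).map ((smulAddHom R M).flip (g j))

/-- The filtration induced by `FM` on a submodule `N ≤ M` is good (with the generators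
`gⱼ` lying in `N`, the equality being read inside `M`). -/
def InducedGoodOn (F : ℤ → AddSubgroup R) {M : Type} [AddCommGroup M] [Module R M]
    (FM : ℤ → AddSubgroup M) (N : Submodule R M) : Prop :=
  ∃ (t : ℕ) (g : Fin t → M) (p : Fin t → ℤ), (∀ j, g j ∈ N) ∧
    ∀ i : ℤ, FM i ⊓ N.toAddSubgroup =
      ⨆ j : Fin t, (F (i - p j)).map ((smulAddHom R M).flip (g j))

end FilteredPaper

/-!
Write `FMᵢ = ∑ⱼ F_{i-pⱼ} gⱼ`. The symbols of the elements `∑ⱼ rⱼ gⱼ` that agree with an element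
of `N` modulo `FM_{i-1}` are the homogeneous elements of a graded submodule of the shifted free
module `⊕ⱼ Gr𝓡(-pⱼ)`; since `Gr𝓡` is noetherian, finitely many of them generate it, coming
from elements `nₖ ∈ N` in degrees `dₖ`. For `x ∈ FMᵢ ∩ N`, the symbol of `x` is a combination of
these with homogeneous coefficients, which lifts to `y = ∑ₖ sₖ nₖ` with `sₖ ∈ F_{i-dₖ}` and
`x - y ∈ FM_{i-1} ∩ N`. As `FM` vanishes in low degrees, induction on `i` gives
`FMᵢ ∩ N = ∑ₖ F_{i-dₖ} nₖ`.
-/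

theorem DirectSum.exists_homogeneous_coeffs_of_mem_span {ι A σ : Type*} [DecidableEq ι]
    [AddCommGroup ι] [Semiring A] [SetLike σ A] [AddSubmonoidClass σ A] (𝒜 : ι → σ)
    [GradedRing 𝒜] {κ τ : Type*} [Fintype κ] {p : τ → ι} {d : κ → ι} {w : κ → τ → A}
    (hw : ∀ k j, w k j ∈ 𝒜 (d k - p j)) {i : ι} {v : τ → A} (hv : ∀ j, v j ∈ 𝒜 (i - p j))
    (h : v ∈ Submodule.span A (Set.range w)) :
    ∃ c : κ → A, (∀ k, c k ∈ 𝒜 (i - d k)) ∧ v = ∑ k, c k • w k := by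
  obtain ⟨c, rfl⟩ := (Submodule.mem_span_range_iff_exists_fun A).1 h
  refine ⟨fun k => decompose 𝒜 (c k) (i - d k), fun k => SetLike.coe_mem _, funext fun j => ?_⟩
  simp only [Finset.sum_apply, Pi.smul_apply, smul_eq_mul] at hv ⊢
  rw [← decompose_of_mem_same 𝒜 (hv j), decompose_sum, DFinsupp.finsetSum_apply,
    AddSubmonoidClass.coe_finsetSum]
  refine Finset.sum_congr rfl fun k _ => ?_
  rw [← coe_decompose_mul_add_of_right_mem 𝒜 (hw k j), sub_add_sub_cancel]

theorem Submodule.exists_fin_family_subset_span_eq {R M : Type*} [Semiring R] [AddCommMonoid M]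
    [Module R M] {S : Set M} (h : (Submodule.span R S).FG) :
    ∃ (s : ℕ) (w : Fin s → M), (∀ k, w k ∈ S) ∧
      Submodule.span R (Set.range w) = Submodule.span R S := by
  obtain ⟨T, hTS, hT⟩ := (Submodule.fg_span_iff_fg_span_finset_subset S).1 h
  obtain ⟨s, w, hw⟩ := T.finite_toSet.fin_embedding
  exact ⟨s, w, fun k => hTS (hw ▸ Set.mem_range_self k), by rw [hw, hT]⟩


theorem le_of_forall_exists_sub_mem {M : Type*} [AddCommGroup M] {P T : ℤ → AddSubgroup M}
    (hT : ∀ i, T (i - 1) ≤ T i) {i₀ : ℤ} (hP : ∀ i ≤ i₀, P i = ⊥)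
    (hstep : ∀ i, ∀ x ∈ P i, ∃ y ∈ T i, x - y ∈ P (i - 1)) (i : ℤ) : P i ≤ T i := by
  rcases le_or_gt i i₀ with hi | hi
  · simp [hP i hi]
  replace hi := hi.le
  induction i, hi using Int.leInduction with
  | base => simp [hP i₀ le_rfl]
  | succ k _ ih =>
    intro x hx
    obtain ⟨y, hyT, hxy⟩ := hstep (k + 1) x hx
    rw [add_sub_cancel_right] at hxy
    have hxyT : x - y ∈ T (k + 1 - 1) := by simpa using ih hxy
    simpa using add_mem (hT (k + 1) hxyT) hyT

namespace FilteredPaper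

variable {R : Type} [Ring R] {F : ℤ → AddSubgroup R}

namespace GrRingReal

variable {A : Type} [Ring A] (re : GrRingReal F A)

def grading (i : ℤ) : AddSubgroup A := (re.emb i).range

noncomputable abbrev gradedRing (hF : IsRingFiltration F) : GradedRing re.grading :=
  { re.internal.chooseDecomposition with
    one_mem := ⟨⟨1, hF.one_mem⟩, re.emb_one hF.one_mem⟩
    mul_mem := by
      rintro i j _ _ ⟨x, rfl⟩ ⟨y, rfl⟩
      exact ⟨_, (re.emb_mul i j x y (hF.mul_mem x.2 y.2)).symm⟩ }

/-- The principal symbol `σᵢ(r)`, with the junk value `0` when `r ∉ Fᵢ`. -/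
noncomputable def symbol (i : ℤ) (r : R) : A := by
  classical exact if h : r ∈ F i then re.emb i ⟨r, h⟩ else 0

/-- The symbol in degree `i` of `∑ⱼ rⱼ gⱼ`, read in the graded free module with generators
of degrees `p j`. -/
noncomputable def symbolVec {τ : Type*} (p : τ → ℤ) (i : ℤ) (r : τ → R) : τ → A :=
  fun j => re.symbol (i - p j) (r j)

variable {re}

theorem symbol_of_mem {i : ℤ} {r : R} (h : r ∈ F i) : re.symbol i r = re.emb i ⟨r, h⟩ := by
  simp [symbol, h]

theorem symbol_mem_grading (i : ℤ) (r : R) : re.symbol i r ∈ re.grading i := by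
  by_cases h : r ∈ F i
  · exact ⟨⟨r, h⟩, (symbol_of_mem h).symm⟩
  · simp only [symbol, h, dite_false]
    exact zero_mem _

theorem exists_symbol_eq {i : ℤ} {a : A} (ha : a ∈ re.grading i) :
    ∃ r ∈ F i, re.symbol i r = a := by
  obtain ⟨x, rfl⟩ := ha
  exact ⟨x, x.2, symbol_of_mem x.2⟩

theorem symbol_mul (hF : IsRingFiltration F) {i j : ℤ} {a b : R} (ha : a ∈ F i) (hb : b ∈ F j) :
    re.symbol i a * re.symbol j b = re.symbol (i + j) (a * b) := by
  rw [symbol_of_mem ha, symbol_of_mem hb, symbol_of_mem (hF.mul_mem ha hb)]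
  exact re.emb_mul i j ⟨a, ha⟩ ⟨b, hb⟩ _

theorem symbol_sum {κ : Type*} [Fintype κ] {i : ℤ} {r : κ → R} (hr : ∀ k, r k ∈ F i) :
    re.symbol i (∑ k, r k) = ∑ k, re.symbol i (r k) := by
  have hsum : (⟨∑ k, r k, sum_mem fun k _ => hr k⟩ : F i) = ∑ k, ⟨r k, hr k⟩ :=
    Subtype.ext (by simp)
  rw [symbol_of_mem (sum_mem fun k _ => hr k), hsum, map_sum]
  exact Finset.sum_congr rfl fun k _ => (symbol_of_mem (hr k)).symm

theorem symbol_eq_symbol_iff {i : ℤ} {a b : R} (ha : a ∈ F i) (hb : b ∈ F i) :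
    re.symbol i a = re.symbol i b ↔ a - b ∈ F (i - 1) := by
  rw [symbol_of_mem ha, symbol_of_mem hb, ← sub_eq_zero, ← map_sub]
  exact re.emb_eq_zero_iff i _

theorem exists_sub_sum_mul_mem (hF : IsRingFiltration F) {κ τ : Type*} [Fintype κ]
    {p : τ → ℤ} {d : κ → ℤ} {ρ : κ → τ → R} (hρ : ∀ k j, ρ k j ∈ F (d k - p j))
    {i : ℤ} {r : τ → R} (hr : ∀ j, r j ∈ F (i - p j))
    (h : re.symbolVec p i r ∈ Submodule.span A (Set.range fun k => re.symbolVec p (d k) (ρ k))) :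
    ∃ s : κ → R, (∀ k, s k ∈ F (i - d k)) ∧ ∀ j, r j - ∑ k, s k * ρ k j ∈ F (i - p j - 1) := by
  let _ := re.gradedRing hF
  obtain ⟨c, hc, hrc⟩ := DirectSum.exists_homogeneous_coeffs_of_mem_span re.grading
    (fun _ _ => symbol_mem_grading _ _) (fun _ => symbol_mem_grading _ _) h
  choose s hs hsc using fun k => exists_symbol_eq (hc k)
  have hmul : ∀ k j, s k * ρ k j ∈ F (i - p j) := fun k j => by
    simpa only [sub_add_sub_cancel] using hF.mul_mem (hs k) (hρ k j)
  refine ⟨s, hs, fun j => ?_⟩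
  rw [← symbol_eq_symbol_iff (re := re) (hr j) (sum_mem fun k _ => hmul k j)]
  have hrj := congr_fun hrc j
  simp only [Finset.sum_apply, Pi.smul_apply, smul_eq_mul, ← hsc] at hrj
  rw [hrj, symbol_sum (hmul · j)]
  refine Finset.sum_congr rfl fun k _ => ?_
  rw [symbol_mul hF (hs k) (hρ k j), sub_add_sub_cancel]

end GrRingReal

section generatedFiltration

variable {M : Type} [AddCommGroup M] [Module R M] {τ : Type*} {g : τ → M} {p : τ → ℤ} {i : ℤ}

variable (F) in
def generatedFiltration (g : τ → M) (p : τ → ℤ) (i : ℤ) : AddSubgroup M :=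
  ⨆ j, (F (i - p j)).map ((smulAddHom R M).flip (g j))

theorem generatedFiltration_le_iff {H : AddSubgroup M} :
    generatedFiltration F g p i ≤ H ↔ ∀ j, ∀ r ∈ F (i - p j), r • g j ∈ H := by
  rw [generatedFiltration, iSup_le_iff]
  simp [SetLike.le_def]

theorem smul_mem_generatedFiltration {j : τ} {r : R} (hr : r ∈ F (i - p j)) :
    r • g j ∈ generatedFiltration F g p i :=
  generatedFiltration_le_iff.1 le_rfl j r hr

theorem mem_generatedFiltration_iff [Fintype τ] {x : M} :
    x ∈ generatedFiltration F g p i ↔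
      ∃ r : τ → R, (∀ j, r j ∈ F (i - p j)) ∧ ∑ j, r j • g j = x := by
  classical
  refine ⟨fun hx => ?_, ?_⟩
  · refine AddSubgroup.iSup_induction _
      (C := fun x => ∃ r : τ → R, (∀ j, r j ∈ F (i - p j)) ∧ ∑ j, r j • g j = x) hx ?_ ?_ ?_
    · rintro j _ hx
      obtain ⟨r, hr, rfl⟩ := hx
      refine ⟨Pi.single j r, fun j' => ?_, by simp [Pi.single_apply, ite_smul]⟩
      rcases eq_or_ne j' j with rfl | h
      · simpa using hr
      · simp [h, zero_mem]
    · exact ⟨0, fun _ => zero_mem _, by simp⟩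
    · rintro _ _ hx hy
      obtain ⟨r, hr, rfl⟩ := hx
      obtain ⟨r', hr', rfl⟩ := hy
      exact ⟨r + r', fun j => add_mem (hr j) (hr' j), by simp [add_smul, Finset.sum_add_distrib]⟩
  · rintro ⟨r, hr, rfl⟩
    exact sum_mem fun j _ => smul_mem_generatedFiltration (hr j)

theorem generatedFiltration_pred_le (hF : IsRingFiltration F) (i : ℤ) :
    generatedFiltration F g p (i - 1) ≤ generatedFiltration F g p i :=
  generatedFiltration_le_iff.2 fun j r hr =>
    smul_mem_generatedFiltration (hF.mono _ (by rwa [sub_right_comm] at hr))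

theorem generatedFiltration_eq_bot (hF : IsRingFiltration F) (h : ∀ j, i < p j) :
    generatedFiltration F g p i = ⊥ :=
  eq_bot_iff.2 <| generatedFiltration_le_iff.2 fun j r hr => by
    rw [hF.bot _ (by linarith [h j]), AddSubgroup.mem_bot] at hr
    simp [hr]

theorem generatedFiltration_le {FM : ℤ → AddSubgroup M} (hMF : IsModuleFiltration F FM)
    (hg : ∀ j, g j ∈ FM (p j)) : generatedFiltration F g p i ≤ FM i :=
  generatedFiltration_le_iff.2 fun j r hr => by
    simpa using hMF.smul_mem hr (hg j)

end generatedFiltration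

section Descent

variable {A : Type} [Ring A] {re : GrRingReal F A}
  {M : Type} [AddCommGroup M] [Module R M] {FM : ℤ → AddSubgroup M} {N : Submodule R M}
  {κ τ : Type*} [Fintype κ] [Fintype τ] {g : τ → M} {p : τ → ℤ}
  {d : κ → ℤ} {ρ : κ → τ → R} {n : κ → M}

theorem exists_sub_mem_of_symbolVec_mem_span (hF : IsRingFiltration F)
    (hMF : IsModuleFiltration F FM) (hgood : ∀ i, FM i = generatedFiltration F g p i)
    (hρ : ∀ k j, ρ k j ∈ F (d k - p j)) (hnN : ∀ k, n k ∈ N)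
    (hn : ∀ k, ∑ j, ρ k j • g j - n k ∈ FM (d k - 1))
    (hspan : ∀ i r, (∀ j, r j ∈ F (i - p j)) → ∑ j, r j • g j ∈ N →
      re.symbolVec p i r ∈ Submodule.span A (Set.range fun k => re.symbolVec p (d k) (ρ k)))
    (i : ℤ) (x : M) (hx : x ∈ FM i ⊓ N.toAddSubgroup) :
    ∃ y ∈ generatedFiltration F n d i, x - y ∈ FM (i - 1) ⊓ N.toAddSubgroup := by
  obtain ⟨hxFM, hxN : x ∈ N⟩ := AddSubgroup.mem_inf.1 hx
  rw [hgood, mem_generatedFiltration_iff] at hxFM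
  obtain ⟨r, hr, rfl⟩ := hxFM
  obtain ⟨s, hs, hrs⟩ := GrRingReal.exists_sub_sum_mul_mem hF hρ hr (hspan i r hr hxN)
  refine ⟨∑ k, s k • n k, mem_generatedFiltration_iff.2 ⟨s, hs, rfl⟩, AddSubgroup.mem_inf.2
    ⟨?_, N.sub_mem hxN (N.sum_mem fun k _ => N.smul_mem (s k) (hnN k))⟩⟩
  have hsplit : ∑ j, r j • g j - ∑ k, s k • n k =
      ∑ j, (r j - ∑ k, s k * ρ k j) • g j + ∑ k, s k • (∑ j, ρ k j • g j - n k) := by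
    simp only [sub_smul, Finset.sum_smul, mul_smul, smul_sub, Finset.smul_sum,
      Finset.sum_sub_distrib]
    rw [Finset.sum_comm (f := fun j k => s k • ρ k j • g j)]
    abel
  rw [hsplit]
  refine add_mem ?_ (sum_mem fun k _ => ?_)
  · rw [hgood]
    refine sum_mem fun j _ => smul_mem_generatedFiltration ?_
    rw [sub_right_comm]
    exact hrs j
  · simpa using hMF.smul_mem (hs k) (hn k)

end Descent

end FilteredPaper

open FilteredPaper in
/-- if `Gr𝓡` (given by a realization `A`) is left noetherian and `𝓜` is
a good `𝓡`-filtration of `M`, then for every submodule `N ≤ M` the induced filtration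
`F_i𝓝 = F_i𝓜 ∩ N` is a good `𝓡`-filtration of `N`. -/
theorem statement_19 (R : Type) [Ring R] (F : ℤ → AddSubgroup R)
    (hF : IsRingFiltration F)
    (A : Type) [Ring A] (re : GrRingReal F A) (hA : IsNoetherianRing A)
    (M : Type) [AddCommGroup M] [Module R M]
    (FM : ℤ → AddSubgroup M) (hFM : IsGoodFiltration F FM)
    (N : Submodule R M) :
    InducedGoodOn F FM N := by
  obtain ⟨hMF, t, g, p, hgood⟩ := hFM
  replace hgood : ∀ i, FM i = generatedFiltration F g p i := hgood
  -- the homogeneous elements of the preimage of `Gr𝓝` in `⊕ⱼ Gr𝓡(-pⱼ)`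
  let S : Set (Fin t → A) := {v | ∃ i r n, (∀ j, r j ∈ F (i - p j)) ∧ n ∈ N ∧
    ∑ j, r j • g j - n ∈ FM (i - 1) ∧ re.symbolVec p i r = v}
  obtain ⟨s, w, hwS, hw⟩ :=
    Submodule.exists_fin_family_subset_span_eq (IsNoetherian.noetherian (Submodule.span A S))
  simp only [S, Set.mem_ofPred_eq] at hwS
  choose d ρ n hρ hnN hn hρw using hwS
  have hspan : ∀ i r, (∀ j, r j ∈ F (i - p j)) → ∑ j, r j • g j ∈ N →
      re.symbolVec p i r ∈ Submodule.span A (Set.range fun k => re.symbolVec p (d k) (ρ k)) := by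
    intro i r hr hN
    rw [funext hρw, hw]
    exact Submodule.subset_span ⟨i, r, _, hr, hN, by simp, rfl⟩
  obtain ⟨b, hb⟩ := (Set.finite_range p).bddBelow
  have hnFM : ∀ k, n k ∈ FM (d k) := fun k => by
    have hρg : ∑ j, ρ k j • g j ∈ FM (d k) :=
      (hgood _).symm ▸ mem_generatedFiltration_iff.2 ⟨_, hρ k, rfl⟩
    simpa using sub_mem hρg (hMF.mono _ (hn k))
  refine ⟨s, n, d, hnN, fun i => le_antisymm ?_ ?_⟩
  · refine le_of_forall_exists_sub_mem (generatedFiltration_pred_le hF) (i₀ := b - 1)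
      (fun i hi => ?_) (exists_sub_mem_of_symbolVec_mem_span hF hMF hgood hρ hnN hn hspan) i
    rw [hgood, generatedFiltration_eq_bot hF fun j => by linarith [hb ⟨j, rfl⟩], bot_inf_eq]
  · exact le_inf (generatedFiltration_le hMF hnFM)
      (generatedFiltration_le_iff.2 fun k r _ => N.smul_mem r (hnN k))
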